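/- Suppose there exists a reconciliation map μ from (T;t,σ) to S. Then there exists a time-consistent reconciliation map from (T;t,σ) to S if and only if the auxiliary directed graph A₂, with vertex set V(S) ∪ V(T) and edges given by rules (A1), (A2), (A3), (A4), is acyclic. -/

import Mathlib

/-- A rooted tree on vertex type `V`, encoded by a parent map.
Edges are directed away from the root; the edge into a non-root vertex `v`
is `(par v, v)`. -/
structure RTree (V : Type*) where
  root : V
  par : V → V
  par_root : par root = root
  par_ne : ∀ v, v ≠ root → par v ≠ v
  reaches : ∀ v, ∃ k, par^[k] v = root

namespace RTree

variable {V : Type*}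

/-- `anc T x y` : `x` is a descendant of `y`, i.e. `x ⪯_T y`. -/
def anc (T : RTree V) (x y : V) : Prop := ∃ k, (T.par)^[k] x = y

/-- strict descendant: `x ≺_T y`. -/
def sanc (T : RTree V) (x y : V) : Prop := T.anc x y ∧ x ≠ y

def IsLeaf (T : RTree V) (v : V) : Prop := ∀ u, T.par u = v → u = v

/-- `x` is a least common ancestor of the set `A`. -/
def IsLca (T : RTree V) (A : Set V) (x : V) : Prop :=
  (∀ a ∈ A, T.anc a x) ∧ ∀ y, (∀ a ∈ A, T.anc a y) → T.anc x y

/-- A time map: strict descendants have strictly larger time stamps. -/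
def IsTimeMap (T : RTree V) (τ : V → ℝ) : Prop :=
  ∀ x y, T.sanc x y → τ y < τ x

end RTree

/-- Event labels: speciation `•`, duplication `□`, HGT `△`, leaf `⊙`. -/
inductive Event where
  | spec | dup | hgt | leaf
deriving DecidableEq

/-- The common setup: a gene tree `T` (vertices `V`) with event labels `t`,
transfer edges `trans` (an edge is recorded by its child endpoint),
a species tree `S` (vertices `W`), the map `sig = σ` assigning to each gene
(leaf of `T`) the species (leaf of `S`) it resides in, and a least common
ancestor function `lca` on the species tree. -/
structure ReconSetup (V W : Type*) where
  T : RTree V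
  S : RTree W
  t : V → Event
  trans : Set V
  sig : V → W
  lca : Set W → W
  trans_ne_root : ∀ v ∈ trans, v ≠ T.root
  trans_hgt : ∀ v ∈ trans, t (T.par v) = Event.hgt
  leaf_iff : ∀ v, T.IsLeaf v ↔ t v = Event.leaf
  sig_leaf : ∀ v, T.IsLeaf v → S.IsLeaf (sig v)
  lca_spec : ∀ A : Set W, A.Nonempty → S.IsLca A (lca A)

/-- lower endpoint of a vertex-or-edge of the species tree
(an edge `(S.par y, y)` is encoded as `Sum.inr y`; a vertex `x` as `Sum.inl x`). -/
def lowPt {W : Type*} : W ⊕ W → W := Sum.elim id id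

namespace ReconSetup

variable {V W : Type*}

/-- ancestor order of the forest `T_{E̅}` obtained by deleting transfer edges. -/
def fanc (R : ReconSetup V W) (x y : V) : Prop :=
  ∃ k, (R.T.par)^[k] x = y ∧ ∀ i < k, (R.T.par)^[i] x ∉ R.trans

def sfanc (R : ReconSetup V W) (x y : V) : Prop := R.fanc x y ∧ x ≠ y

/-- `σ_{T̅}(u)`: the species of the leaves of `T` below `u` in the forest `T_{E̅}`. -/
def sigmaBar (R : ReconSetup V W) (u : V) : Set W :=
  R.sig '' {l | R.T.IsLeaf l ∧ R.fanc l u}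

/-- Ancestor order of `S` extended to vertices and edges:
`z ⪯ (x,y) ↔ z ⪯ y`, `(x,y) ⪯ z ↔ x ⪯ z`, `(x,y) ⪯ (a,b) ↔ y ⪯ b`. -/
def extLE (R : ReconSetup V W) : W ⊕ W → W ⊕ W → Prop
  | Sum.inl a, Sum.inl b => R.S.anc a b
  | Sum.inl a, Sum.inr y => R.S.anc a y
  | Sum.inr y, Sum.inl b => R.S.anc (R.S.par y) b
  | Sum.inr y, Sum.inr z => R.S.anc y z

def extLT (R : ReconSetup V W) (p q : W ⊕ W) : Prop := R.extLE p q ∧ ¬ R.extLE q p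

def incomp (R : ReconSetup V W) (p q : W ⊕ W) : Prop := ¬ R.extLE p q ∧ ¬ R.extLE q p

def IsDupHGT (R : ReconSetup V W) (u : V) : Prop :=
  R.t u = Event.dup ∨ R.t u = Event.hgt

/-- (M1) leaf constraint. -/
def M1 (R : ReconSetup V W) (μ : V → W ⊕ W) : Prop :=
  ∀ u, R.T.IsLeaf u → μ u = Sum.inl (R.sig u)

/-- (M2i) speciation vertices map to the lca of the species below them. -/
def M2i (R : ReconSetup V W) (μ : V → W ⊕ W) : Prop :=
  ∀ u, R.t u = Event.spec → μ u = Sum.inl (R.lca (R.sigmaBar u))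

/-- (M2ii) duplication/HGT vertices map to edges of `S`. -/
def M2ii (R : ReconSetup V W) (μ : V → W ⊕ W) : Prop :=
  ∀ u, R.IsDupHGT u → ∃ y, y ≠ R.S.root ∧ μ u = Sum.inr y

/-- (M2iii) the endpoints of a transfer edge receive incomparable images. -/
def M2iii (R : ReconSetup V W) (μ : V → W ⊕ W) : Prop :=
  ∀ v ∈ R.trans, R.incomp (μ (R.T.par v)) (μ v)

/-- (M3) ancestor constraint within components of `T_{E̅}`. -/
def M3 (R : ReconSetup V W) (μ : V → W ⊕ W) : Prop :=
  ∀ v w, R.sfanc v w →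
    ((R.IsDupHGT v ∧ R.IsDupHGT w) → R.extLE (μ v) (μ w)) ∧
    (¬ (R.IsDupHGT v ∧ R.IsDupHGT w) → R.extLT (μ v) (μ w))

/-- `μ` is a reconciliation map from `(T;t,σ)` to `S`. -/
def IsRecon (R : ReconSetup V W) (μ : V → W ⊕ W) : Prop :=
  R.M1 μ ∧ R.M2i μ ∧ R.M2ii μ ∧ R.M2iii μ ∧ R.M3 μ

/-- (O1) every internal vertex has at least two children. -/
def O1 (R : ReconSetup V W) : Prop :=
  ∀ v, ¬ R.T.IsLeaf v →
    ∃ a b, a ≠ b ∧ R.T.par a = v ∧ R.T.par b = v ∧ a ≠ v ∧ b ≠ v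

/-- (O2) every HGT vertex has a transfer child edge and a non-transfer child edge. -/
def O2 (R : ReconSetup V W) : Prop :=
  ∀ v, R.t v = Event.hgt →
    (∃ c, R.T.par c = v ∧ c ∈ R.trans) ∧ (∃ c, R.T.par c = v ∧ c ≠ v ∧ c ∉ R.trans)

/-- (Σ1) a speciation vertex has two children whose species sets are disjoint. -/
def Sigma1 (R : ReconSetup V W) : Prop :=
  ∀ x, R.t x = Event.spec →
    ∃ v w, v ≠ w ∧ R.T.par v = x ∧ R.T.par w = x ∧ v ≠ x ∧ w ≠ x ∧
      R.sigmaBar v ∩ R.sigmaBar w = ∅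

/-- (Σ2) the species sets across a transfer edge are disjoint. -/
def Sigma2 (R : ReconSetup V W) : Prop :=
  ∀ w ∈ R.trans, R.sigmaBar (R.T.par w) ∩ R.sigmaBar w = ∅

/-- the gene tree is binary. -/
def BinaryT (R : ReconSetup V W) : Prop :=
  ∀ v, ¬ R.T.IsLeaf v →
    ∃ a b, a ≠ b ∧ ∀ c, (R.T.par c = v ∧ c ≠ v) ↔ (c = a ∨ c = b)

/-- the species tree is binary. -/
def BinaryS (R : ReconSetup V W) : Prop :=
  ∀ v, ¬ R.S.IsLeaf v →
    ∃ a b, a ≠ b ∧ ∀ c, (R.S.par c = v ∧ c ≠ v) ↔ (c = a ∨ c = b)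

/-- (C1) speciation vertices and leaves get the same time as their image. -/
def C1 (R : ReconSetup V W) (μ : V → W ⊕ W) (τT : V → ℝ) (τS : W → ℝ) : Prop :=
  ∀ u x, (R.t u = Event.spec ∨ R.t u = Event.leaf) → μ u = Sum.inl x → τT u = τS x

/-- (C2) a vertex mapped into an edge `(x,y)` gets a time strictly between
the times of `x` and `y`. -/
def C2 (R : ReconSetup V W) (μ : V → W ⊕ W) (τT : V → ℝ) (τS : W → ℝ) : Prop :=
  ∀ u y, R.IsDupHGT u → μ u = Sum.inr y → τS (R.S.par y) < τT u ∧ τT u < τS y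

/-- `μ` is a time-consistent reconciliation map. -/
def TimeConsistent (R : ReconSetup V W) (μ : V → W ⊕ W) : Prop :=
  ∃ τT τS, R.T.IsTimeMap τT ∧ R.S.IsTimeMap τS ∧ R.C1 μ τT τS ∧ R.C2 μ τT τS

/-- (D1). -/
def D1 (R : ReconSetup V W) (μ : V → W ⊕ W) (τT : V → ℝ) (τS : W → ℝ) : Prop :=
  ∀ u x, μ u = Sum.inl x → τT u = τS x

/-- (D2). -/
def D2 (R : ReconSetup V W) (τT : V → ℝ) (τS : W → ℝ) : Prop :=
  ∀ u x, R.IsDupHGT u → R.S.anc x (R.lca (R.sigmaBar u)) → τT u < τS x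

/-- (D3), for a transfer edge `(T.par v, v)` with `v ∈ trans`. -/
def D3 (R : ReconSetup V W) (τT : V → ℝ) (τS : W → ℝ) : Prop :=
  ∀ v x, v ∈ R.trans →
    R.S.anc (R.lca (R.sigmaBar (R.T.par v) ∪ R.sigmaBar v)) x → τS x < τT (R.T.par v)

/-- The DTL-scenario axioms (I)-(IV) for a map `γ : V(T) → V(S)`. -/
def DTL (R : ReconSetup V W) (γ : V → W) : Prop :=
  (∀ u, R.T.IsLeaf u → γ u = R.sig u) ∧
  (∀ u v w, v ≠ w → R.T.par v = u → R.T.par w = u → v ≠ u → w ≠ u →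
    ((¬ R.S.sanc (γ u) (γ v) ∧ ¬ R.S.sanc (γ u) (γ w)) ∧
     (R.S.anc (γ v) (γ u) ∨ R.S.anc (γ w) (γ u)))) ∧
  (∀ v, v ≠ R.T.root →
    (v ∈ R.trans ↔ (¬ R.S.anc (γ (R.T.par v)) (γ v) ∧ ¬ R.S.anc (γ v) (γ (R.T.par v))))) ∧
  (∀ u v w, v ≠ w → R.T.par v = u → R.T.par w = u → v ≠ u → w ≠ u →
    ((R.t u = Event.hgt ↔ (v ∈ R.trans ∨ w ∈ R.trans)) ∧
     (R.t u = Event.spec →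
       γ u = R.lca {γ v, γ w} ∧ ¬ R.S.anc (γ v) (γ w) ∧ ¬ R.S.anc (γ w) (γ v)) ∧
     (R.t u = Event.dup → R.S.anc (R.lca {γ v, γ w}) (γ u))))

end ReconSetup

/-- A directed graph (relation) is acyclic: no edge closes a directed cycle. -/
def Acyclic {α : Type*} (r : α → α → Prop) : Prop :=
  ∀ x y, r x y → ¬ Relation.ReflTransGen r y x

/-- The vertex of the auxiliary graph corresponding to a gene-tree vertex:
speciation vertices and leaves are identified with their image in `S`. -/
def toA {V W : Type*} (R : ReconSetup V W) (μ : V → W ⊕ W) (u : V) : V ⊕ W :=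
  if R.t u = Event.spec ∨ R.t u = Event.leaf then Sum.inr (lowPt (μ u)) else Sum.inl u

/-- The auxiliary graph `A₂` with edges (A1), (A2), (A3), (A4). -/
inductive A2rel {V W : Type*} (R : ReconSetup V W) (μ : V → W ⊕ W) :
    V ⊕ W → V ⊕ W → Prop
  | a1 (v : V) (hv : v ≠ R.T.root) :
      A2rel R μ (toA R μ (R.T.par v)) (toA R μ v)
  | a2 (y : W) (hy : y ≠ R.S.root) :
      A2rel R μ (Sum.inr (R.S.par y)) (Sum.inr y)
  | a3 (u : V) (h : R.IsDupHGT u) :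
      A2rel R μ (Sum.inl u) (Sum.inr (R.lca (R.sigmaBar u)))
  | a4 (v : V) (hv : v ∈ R.trans) :
      A2rel R μ (Sum.inr (R.lca (R.sigmaBar (R.T.par v) ∪ R.sigmaBar v)))
                 (Sum.inl (R.T.par v))

/-!
The edges of `A₂` encode the timing constraints (D1)–(D3) of a time-consistent reconciliation:
(A1) and (A2) say that time increases away from the roots, (A3) that a duplication or HGT
vertex `u` happens before `lca σ̄(u)`, and (A4) that the lca of the species on both sides of a
transfer edge is older than the transfer. Hence the times of a time-consistent reconciliation,
read as a potential on `V(T) ∪ V(S)`, strictly increase along every edge of `A₂`.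

Conversely a topological order of an acyclic `A₂` gives time maps on `T` and `S`. Taking odd
values on the duplication and HGT vertices of `A₂`, even values on `V(S)`, and the root of `S`
first, every duplication or HGT vertex `u` has its time strictly inside the time interval of one
edge above `lca σ̄(u)`; moving `u` onto that edge yields a map that realises the times. Along a
non-transfer edge of `T` the images of its endpoints then lie on one path of `S` towards the
root, ordered by time, which gives (M3); across a transfer edge (A4) forces them to be
incomparable, which gives (M2iii).
-/

open Function

namespace RTree

variable {V : Type*} (T : RTree V)

theorem anc_refl (x : V) : T.anc x x := ⟨0, rfl⟩

theorem anc_trans {x y z : V} : T.anc x y → T.anc y z → T.anc x z := by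
  rintro ⟨i, rfl⟩ ⟨j, rfl⟩
  exact ⟨j + i, iterate_add_apply _ _ _ _⟩

theorem anc_par (x : V) : T.anc x (T.par x) := ⟨1, rfl⟩

theorem anc_root (x : V) : T.anc x T.root := T.reaches x

theorem iterate_par_root (k : ℕ) : T.par^[k] T.root = T.root := iterate_fixed T.par_root k

theorem eq_root_of_root_anc {x : V} (h : T.anc T.root x) : x = T.root := by
  obtain ⟨k, rfl⟩ := h
  exact T.iterate_par_root k

theorem sanc_par {v : V} (hv : v ≠ T.root) : T.sanc v (T.par v) :=
  ⟨T.anc_par v, (T.par_ne v hv).symm⟩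

theorem anc_antisymm {x y : V} (hxy : T.anc x y) (hyx : T.anc y x) : x = y := by
  obtain ⟨i, rfl⟩ := hxy
  obtain ⟨j, hj⟩ := hyx
  rcases Nat.eq_zero_or_pos (j + i) with h0 | hpos
  · obtain rfl : i = 0 := by omega
    rfl
  -- `x` is a periodic point of `par`, and its orbit ends in the fixed point `root`.
  have hper : IsPeriodicPt T.par (j + i) x := by
    rw [IsPeriodicPt, IsFixedPt, iterate_add_apply, hj]
  obtain ⟨k, hk⟩ := T.reaches x
  obtain rfl : x = T.root := by
    rw [← (hper.mul_const k).eq, ← Nat.sub_add_cancel (Nat.le_mul_of_pos_left k hpos),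
      iterate_add_apply, hk, T.iterate_par_root]
  exact (T.iterate_par_root i).symm

theorem sanc_trans {x y z : V} (hxy : T.sanc x y) (hyz : T.sanc y z) : T.sanc x z := by
  refine ⟨T.anc_trans hxy.1 hyz.1, ?_⟩
  rintro rfl
  exact hxy.2 (T.anc_antisymm hxy.1 hyz.1)

theorem wellFounded_sanc [Finite V] : WellFounded T.sanc :=
  have : IsTrans V T.sanc := ⟨fun _ _ _ => T.sanc_trans⟩
  have : Std.Irrefl T.sanc := ⟨fun _ h => h.2 rfl⟩
  Finite.wellFounded_of_trans_of_irrefl _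

theorem anc_par_of_anc_of_ne {x y : V} (h : T.anc x y) (hne : x ≠ y) : T.anc (T.par x) y := by
  obtain ⟨_ | k, rfl⟩ := h
  · exact absurd rfl hne
  · exact ⟨k, rfl⟩

theorem ne_root_of_anc_of_ne {x y : V} (h : T.anc x y) (hne : x ≠ y) : x ≠ T.root := by
  rintro rfl
  exact hne (T.eq_root_of_root_anc h).symm

theorem anc_total {a x y : V} (hx : T.anc a x) (hy : T.anc a y) : T.anc x y ∨ T.anc y x := by
  obtain ⟨i, rfl⟩ := hx
  obtain ⟨j, rfl⟩ := hy
  rcases le_total i j with h | h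
  · exact .inl ⟨j - i, by rw [← iterate_add_apply, Nat.sub_add_cancel h]⟩
  · exact .inr ⟨i - j, by rw [← iterate_add_apply, Nat.sub_add_cancel h]⟩

theorem anc_or_anc_par {a x y : V} (hx : T.anc a x) (hy : T.anc a y) :
    T.anc x y ∨ T.anc (T.par y) x := by
  rcases T.anc_total hx hy with h | h
  · exact .inl h
  · rcases eq_or_ne y x with rfl | hne
    · exact .inl (T.anc_refl y)
    · exact .inr (T.anc_par_of_anc_of_ne h hne)

variable {T} {τ : V → ℝ}

/-- (C1) and (C2) for a single point `p` of the tree at time `t`. -/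
def PlacedAt (T : RTree V) (τ : V → ℝ) : V ⊕ V → ℝ → Prop
  | .inl x, t => t = τ x
  | .inr y, t => τ (T.par y) < t ∧ t < τ y

theorem PlacedAt.le_lowPt {p : V ⊕ V} {t : ℝ} (h : T.PlacedAt τ p t) : t ≤ τ (lowPt p) := by
  cases p with
  | inl x => exact h.le
  | inr y => exact h.2.le

theorem IsTimeMap.le_of_anc (hτ : T.IsTimeMap τ) {x y : V} (h : T.anc x y) : τ y ≤ τ x := by
  rcases eq_or_ne x y with rfl | hne
  · exact le_rfl
  · exact (hτ x y ⟨h, hne⟩).le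

theorem isTimeMap_of_par_lt (h : ∀ v, v ≠ T.root → τ (T.par v) < τ v) : T.IsTimeMap τ := by
  have hpar : ∀ v, τ (T.par v) ≤ τ v := fun v => by
    rcases eq_or_ne v T.root with rfl | hv
    · rw [T.par_root]
    · exact (h v hv).le
  have hiter : ∀ k v, τ (T.par^[k] v) ≤ τ v := by
    intro k
    induction k with
    | zero => exact fun v => le_rfl
    | succ k ih => exact fun v => (ih (T.par v)).trans (hpar v)
  rintro x y ⟨hxy, hne⟩
  have hx := T.ne_root_of_anc_of_ne hxy hne
  obtain ⟨k, rfl⟩ := T.anc_par_of_anc_of_ne hxy hne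
  exact (hiter k _).trans_lt (h x hx)

theorem exists_placedAt_inr {c : ℝ} (hc : ∀ y, τ y ≠ c) (hroot : τ T.root < c) {L : V}
    (hL : c < τ L) : ∃ y, T.anc L y ∧ y ≠ T.root ∧ T.PlacedAt τ (.inr y) c := by
  obtain ⟨k, hk⟩ := T.reaches L
  induction k generalizing L with
  | zero =>
    subst hk
    exact absurd (hroot.trans hL) (lt_irrefl _)
  | succ k ih =>
    have hLr : L ≠ T.root := by
      rintro rfl
      exact absurd (hroot.trans hL) (lt_irrefl _)
    rcases lt_or_gt_of_ne (hc (T.par L)) with hlt | hgt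
    · exact ⟨L, T.anc_refl L, hLr, hlt, hL⟩
    · obtain ⟨y, hy, hyr, hyc⟩ := ih hgt hk
      exact ⟨y, T.anc_trans (T.anc_par L) hy, hyr, hyc⟩

end RTree

theorem acyclic_of_lt {α β : Type*} [Preorder β] {r : α → α → Prop} (g : α → β)
    (hg : ∀ a b, r a b → g a < g b) : Acyclic r := by
  intro x y hxy hyx
  have hle : ∀ {a b}, Relation.ReflTransGen r a b → g a ≤ g b := fun h => by
    induction h with
    | refl => exact le_rfl
    | tail _ hbc ih => exact ih.trans (hg _ _ hbc).le
  exact (hg x y hxy).not_ge (hle hyx)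

noncomputable def predRank {α : Type*} (r : α → α → Prop) (a : α) : ℕ :=
  {b | Relation.TransGen r b a}.ncard

theorem predRank_lt {α : Type*} [Finite α] {r : α → α → Prop} (hr : Acyclic r) {a b : α}
    (hab : r a b) : predRank r a < predRank r b := by
  refine Set.ncard_lt_ncard ((Set.ssubset_iff_of_subset fun c hc => hc.tail hab).2
    ⟨a, .single hab, fun ha => ?_⟩)
  obtain ⟨c, hac, hca⟩ := Relation.TransGen.head'_iff.mp ha
  exact hr a c hac hca

theorem predRank_eq_zero {α : Type*} {r : α → α → Prop} {m : α} (hm : ∀ a, ¬ r a m) :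
    predRank r m = 0 := by
  have : {b | Relation.TransGen r b m} = ∅ := Set.eq_empty_of_forall_notMem fun b hb => by
    obtain ⟨c, -, hcm⟩ := Relation.TransGen.tail'_iff.mp hb
    exact hm c hcm
  rw [predRank, this, Set.ncard_empty]

/-- The potential is twice the `predRank`, plus one on the left summand. -/
theorem exists_potential_of_acyclic {α β : Type*} [Finite α] [Finite β]
    {r : α ⊕ β → α ⊕ β → Prop} (hr : Acyclic r) (m : β) (hm : ∀ a, ¬ r a (.inr m)) :
    ∃ g : α ⊕ β → ℝ, (∀ a b, r a b → g a < g b) ∧ (∀ a b, g (.inl a) ≠ g (.inr b)) ∧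
      ∀ a, g (.inr m) < g (.inl a) := by
  let e : α ⊕ β → ℕ := Sum.elim (fun _ => 1) (fun _ => 0)
  have he : ∀ p, e p ≤ 1 := by rintro (_ | _) <;> simp [e]
  refine ⟨fun p => ((2 * predRank r p + e p : ℕ) : ℝ), fun a b hab => ?_, fun a b h => ?_,
    fun a => ?_⟩
  · have := predRank_lt hr hab
    have := he a
    exact Nat.cast_lt.mpr (by omega)
  · have := Nat.cast_injective h
    simp only [e, Sum.elim_inl, Sum.elim_inr] at this
    omega
  · refine Nat.cast_lt.mpr ?_
    simp [e, predRank_eq_zero hm]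

namespace ReconSetup

variable {V W : Type*} (R : ReconSetup V W)

theorem not_isDupHGT_iff {u : V} :
    ¬ R.IsDupHGT u ↔ R.t u = Event.spec ∨ R.t u = Event.leaf := by
  unfold IsDupHGT
  cases R.t u <;> simp

theorem toA_of_isDupHGT {μ : V → W ⊕ W} {u : V} (h : R.IsDupHGT u) : toA R μ u = .inl u :=
  if_neg (R.not_isDupHGT_iff.not_right.mp h)

theorem toA_of_not_isDupHGT {μ : V → W ⊕ W} {u : V} (h : ¬ R.IsDupHGT u) :
    toA R μ u = .inr (lowPt (μ u)) :=
  if_pos (R.not_isDupHGT_iff.mp h)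

theorem fanc_refl (u : V) : R.fanc u u := ⟨0, rfl, fun _ h => absurd h (Nat.not_lt_zero _)⟩

theorem fanc_par {v : V} (hv : v ∉ R.trans) : R.fanc v (R.T.par v) :=
  ⟨1, rfl, fun _ hi => Nat.lt_one_iff.mp hi ▸ hv⟩

theorem fanc_trans {x y z : V} : R.fanc x y → R.fanc y z → R.fanc x z := by
  rintro ⟨i, rfl, hi⟩ ⟨j, rfl, hj⟩
  refine ⟨j + i, iterate_add_apply _ _ _ _, fun m hm => ?_⟩
  rcases lt_or_ge m i with h | h
  · exact hi m h
  · have := hj (m - i) (by omega)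
    rwa [← iterate_add_apply, Nat.sub_add_cancel h] at this

theorem exists_child_not_mem_trans (hO1 : R.O1) (hO2 : R.O2) {v : V} (hv : ¬ R.T.IsLeaf v) :
    ∃ c, R.T.par c = v ∧ c ≠ v ∧ c ∉ R.trans := by
  by_cases hh : R.t v = Event.hgt
  · exact (hO2 v hh).2
  · obtain ⟨a, -, -, ha, -, hav, -⟩ := hO1 v hv
    exact ⟨a, ha, hav, fun htr => hh (ha ▸ R.trans_hgt a htr)⟩

theorem exists_leaf_fanc [Finite V] (hO1 : R.O1) (hO2 : R.O2) (u : V) :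
    ∃ l, R.T.IsLeaf l ∧ R.fanc l u := by
  obtain ⟨l, hlu, hmin⟩ := R.T.wellFounded_sanc.has_min {l | R.fanc l u} ⟨u, R.fanc_refl u⟩
  refine ⟨l, ?_, hlu⟩
  by_contra hl
  obtain ⟨c, rfl, hc, hct⟩ := R.exists_child_not_mem_trans hO1 hO2 hl
  exact hmin c (R.fanc_trans (R.fanc_par hct) hlu) ⟨R.T.anc_par c, hc⟩

theorem mem_sigmaBar {l u : V} (hl : R.T.IsLeaf l) (h : R.fanc l u) :
    R.sig l ∈ R.sigmaBar u :=
  ⟨l, ⟨hl, h⟩, rfl⟩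

theorem sigmaBar_nonempty [Finite V] (hO1 : R.O1) (hO2 : R.O2) (u : V) :
    (R.sigmaBar u).Nonempty :=
  let ⟨_, hl, h⟩ := R.exists_leaf_fanc hO1 hO2 u
  ⟨_, R.mem_sigmaBar hl h⟩

theorem sigmaBar_mono {x y : V} (h : R.fanc x y) : R.sigmaBar x ⊆ R.sigmaBar y := by
  rintro _ ⟨l, ⟨hl, hlx⟩, rfl⟩
  exact R.mem_sigmaBar hl (R.fanc_trans hlx h)

theorem anc_lca {A : Set W} (hA : A.Nonempty) {a : W} (ha : a ∈ A) : R.S.anc a (R.lca A) :=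
  (R.lca_spec A hA).1 a ha

theorem lca_anc {A : Set W} (hA : A.Nonempty) {y : W} (h : ∀ a ∈ A, R.S.anc a y) :
    R.S.anc (R.lca A) y :=
  (R.lca_spec A hA).2 y h

theorem lca_anc_lca {A B : Set W} (hA : A.Nonempty) (hAB : A ⊆ B) :
    R.S.anc (R.lca A) (R.lca B) :=
  R.lca_anc hA fun _ ha => R.anc_lca (hA.mono hAB) (hAB ha)

theorem lca_union_anc {A B : Set W} (hA : A.Nonempty) (hB : B.Nonempty) {x : W}
    (hAx : R.S.anc (R.lca A) x) (hBx : R.S.anc (R.lca B) x) : R.S.anc (R.lca (A ∪ B)) x :=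
  R.lca_anc (hA.mono Set.subset_union_left) fun _ h => h.elim
    (fun ha => R.S.anc_trans (R.anc_lca hA ha) hAx) (fun hb => R.S.anc_trans (R.anc_lca hB hb) hBx)

theorem extLE_refl (p : W ⊕ W) : R.extLE p p := by
  cases p <;> exact R.S.anc_refl _

theorem extLE_inl_left_iff {x : W} {q : W ⊕ W} :
    R.extLE (.inl x) q ↔ R.S.anc x (lowPt q) := by
  cases q <;> rfl

theorem extLE_inr_right_iff {y : W} {q : W ⊕ W} :
    R.extLE q (.inr y) ↔ R.S.anc (lowPt q) y := by
  cases q <;> rfl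

theorem extLE_inr_of_anc_par {y : W} {q : W ⊕ W} (h : R.S.anc (R.S.par y) (lowPt q)) :
    R.extLE (.inr y) q := by
  cases q with
  | inl b => exact h
  | inr b => exact R.S.anc_trans (R.S.anc_par y) h

theorem extLE_inl_root (q : W ⊕ W) : R.extLE q (.inl R.S.root) := by
  cases q <;> exact R.S.anc_root _

theorem anc_lowPt_of_extLE {p q : W ⊕ W} (h : R.extLE p q) : R.S.anc (lowPt p) (lowPt q) := by
  cases p with
  | inl a => exact R.extLE_inl_left_iff.mp h
  | inr y =>
    cases q with
    | inl b => exact R.S.anc_trans (R.S.anc_par y) h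
    | inr b => exact h

theorem extLE_trans {p q r : W ⊕ W} (hpq : R.extLE p q) (hqr : R.extLE q r) : R.extLE p r := by
  cases r with
  | inr z =>
    exact R.extLE_inr_right_iff.mpr
      (R.S.anc_trans (R.anc_lowPt_of_extLE hpq) (R.extLE_inr_right_iff.mp hqr))
  | inl c =>
    cases p with
    | inl a =>
      exact R.S.anc_trans (R.extLE_inl_left_iff.mp hpq) (R.anc_lowPt_of_extLE hqr)
    | inr y =>
      cases q with
      | inl b => exact R.S.anc_trans hpq hqr
      | inr w =>
        rcases eq_or_ne y w with rfl | hne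
        · exact hqr
        · exact R.S.anc_trans (R.S.anc_par_of_anc_of_ne hpq hne)
            (R.S.anc_trans (R.S.anc_par w) hqr)

theorem extLT_of_lt_of_le {p q r : W ⊕ W} (hpq : R.extLT p q) (hqr : R.extLE q r) :
    R.extLT p r :=
  ⟨R.extLE_trans hpq.1 hqr, fun h => hpq.2 (R.extLE_trans hqr h)⟩

theorem extLT_of_le_of_lt {p q r : W ⊕ W} (hpq : R.extLE p q) (hqr : R.extLT q r) :
    R.extLT p r :=
  ⟨R.extLE_trans hpq hqr.1, fun h => hqr.2 (R.extLE_trans h hpq)⟩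

theorem not_anc_of_incomp {y x : W} {q : W ⊕ W} (h : R.incomp (.inr y) q)
    (hx : R.S.anc x (lowPt q)) : ¬ R.S.anc x y := by
  intro hxy
  rcases R.S.anc_or_anc_par hx hxy with hqy | hyq
  · exact h.2 (R.extLE_inr_right_iff.mpr hqy)
  · exact h.1 (R.extLE_inr_of_anc_par hyq)

end ReconSetup

namespace ReconSetup

variable {V W : Type*} {R : ReconSetup V W} {μ ν : V → W ⊕ W}

theorem exists_inl_of_not_isDupHGT (hM1 : R.M1 ν) (hM2i : R.M2i ν) {u : V}
    (hu : ¬ R.IsDupHGT u) : ∃ x, ν u = .inl x := by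
  rcases R.not_isDupHGT_iff.mp hu with hs | hl
  · exact ⟨_, hM2i u hs⟩
  · exact ⟨_, hM1 u ((R.leaf_iff u).mpr hl)⟩

namespace IsRecon

theorem eq_of_not_isDupHGT (hμ : R.IsRecon μ) (hν : R.IsRecon ν) {u : V}
    (hu : ¬ R.IsDupHGT u) : μ u = ν u := by
  rcases R.not_isDupHGT_iff.mp hu with hs | hl
  · rw [hμ.2.1 u hs, hν.2.1 u hs]
  · rw [hμ.1 u ((R.leaf_iff u).mpr hl), hν.1 u ((R.leaf_iff u).mpr hl)]

theorem M1_M2i_of_eq (hμ : R.IsRecon μ) (h : ∀ u, ¬ R.IsDupHGT u → ν u = μ u) :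
    R.M1 ν ∧ R.M2i ν :=
  ⟨fun u hu => (h u (R.not_isDupHGT_iff.mpr (.inr ((R.leaf_iff u).mp hu)))).trans (hμ.1 u hu),
    fun u hu => (h u (R.not_isDupHGT_iff.mpr (.inl hu))).trans (hμ.2.1 u hu)⟩

theorem lca_anc_lowPt [Finite V] (hν : R.IsRecon ν) (hO1 : R.O1) (hO2 : R.O2) (u : V) :
    R.S.anc (R.lca (R.sigmaBar u)) (lowPt (ν u)) := by
  refine R.lca_anc (R.sigmaBar_nonempty hO1 hO2 u) ?_
  rintro _ ⟨l, ⟨hl, hlu⟩, rfl⟩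
  have hle : R.extLE (ν l) (ν u) := by
    rcases eq_or_ne l u with rfl | hne
    · exact R.extLE_refl _
    · have hld : ¬ R.IsDupHGT l := R.not_isDupHGT_iff.mpr (.inr ((R.leaf_iff l).mp hl))
      exact ((hν.2.2.2.2 l u ⟨hlu, hne⟩).2 fun h => hld h.1).1
  rw [hν.1 l hl] at hle
  exact R.extLE_inl_left_iff.mp hle

theorem ne_inl_root (hν : R.IsRecon ν) {v : V} (hv : v ≠ R.T.root) :
    ν v ≠ .inl R.S.root := by
  intro hvr
  by_cases htr : v ∈ R.trans
  · exact (hν.2.2.2.1 v htr).1 (by rw [hvr]; exact R.extLE_inl_root _)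
  · have hvd : ¬ R.IsDupHGT v := fun h => by
      obtain ⟨y, -, hy⟩ := hν.2.2.1 v h
      exact Sum.inl_ne_inr (hvr.symm.trans hy)
    have hlt := (hν.2.2.2.2 v (R.T.par v) ⟨R.fanc_par htr, (R.T.par_ne v hv).symm⟩).2
      fun h => hvd h.1
    exact hlt.2 (by rw [hvr]; exact R.extLE_inl_root _)

theorem not_A2rel_inr_root [Finite V] (hμ : R.IsRecon μ) (hO1 : R.O1) (hO2 : R.O2)
    (a : V ⊕ W) : ¬ A2rel R μ a (.inr R.S.root) := by
  generalize hb : (Sum.inr R.S.root : V ⊕ W) = b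
  intro h
  cases h with
  | a1 v hv =>
    by_cases hd : R.IsDupHGT v
    · rw [R.toA_of_isDupHGT hd] at hb
      exact Sum.inr_ne_inl hb
    · obtain ⟨x, hx⟩ := exists_inl_of_not_isDupHGT hμ.1 hμ.2.1 hd
      rw [R.toA_of_not_isDupHGT hd, hx] at hb
      exact hμ.ne_inl_root hv (hx.trans (congrArg Sum.inl (Sum.inr.inj hb).symm))
  | a2 y hy => exact hy (Sum.inr.inj hb).symm
  | a3 u hu =>
    obtain ⟨y, hy, huy⟩ := hμ.2.2.1 u hu
    have hroot := hμ.lca_anc_lowPt hO1 hO2 u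
    rw [huy, ← Sum.inr.inj hb] at hroot
    exact hy (R.S.eq_root_of_root_anc hroot)
  | a4 v hv => exact Sum.inr_ne_inl hb

theorem anc_par_lca_union [Finite V] (hν : R.IsRecon ν) (hO1 : R.O1) (hO2 : R.O2) {v : V}
    (hv : v ∈ R.trans) {y : W} (hy : ν (R.T.par v) = .inr y) :
    R.S.anc (R.S.par y) (R.lca (R.sigmaBar (R.T.par v) ∪ R.sigmaBar v)) := by
  have hA := R.sigmaBar_nonempty hO1 hO2 (R.T.par v)
  have hB := R.sigmaBar_nonempty hO1 hO2 v
  have hAy : R.S.anc (R.lca (R.sigmaBar (R.T.par v))) y := by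
    simpa [hy, lowPt] using hν.lca_anc_lowPt hO1 hO2 (R.T.par v)
  have hinc : R.incomp (.inr y) (ν v) := hy ▸ hν.2.2.2.1 v hv
  have hBy := R.not_anc_of_incomp hinc (hν.lca_anc_lowPt hO1 hO2 v)
  have hBz := R.lca_anc_lca hB (Set.subset_union_right (s := R.sigmaBar (R.T.par v)))
  rcases R.S.anc_total hAy (R.lca_anc_lca hA Set.subset_union_left) with hyz | hzy
  · exact R.S.anc_par_of_anc_of_ne hyz fun h => hBy (h ▸ hBz)
  · exact absurd (R.S.anc_trans hBz hzy) hBy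

end IsRecon

variable (R)

theorem acyclic_A2rel_of_timeConsistent [Finite V] (hO1 : R.O1) (hO2 : R.O2)
    (hμ : R.IsRecon μ) (hν : R.IsRecon ν) (hTC : R.TimeConsistent ν) : Acyclic (A2rel R μ) := by
  obtain ⟨τT, τS, hτT, hτS, hC1, hC2⟩ := hTC
  have htoA : ∀ u, Sum.elim τT τS (toA R μ u) = τT u := by
    intro u
    by_cases hu : R.IsDupHGT u
    · rw [R.toA_of_isDupHGT hu]
      rfl
    · obtain ⟨x, hx⟩ := exists_inl_of_not_isDupHGT hν.1 hν.2.1 hu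
      rw [R.toA_of_not_isDupHGT hu, hμ.eq_of_not_isDupHGT hν hu, hx]
      exact (hC1 u x (R.not_isDupHGT_iff.mp hu) hx).symm
  refine acyclic_of_lt (Sum.elim τT τS) fun a b hab => ?_
  cases hab with
  | a1 v hv =>
    rw [htoA, htoA]
    exact hτT _ _ (R.T.sanc_par hv)
  | a2 y hy => exact hτS _ _ (R.S.sanc_par hy)
  | a3 u hu =>
    obtain ⟨y, -, hy⟩ := hν.2.2.1 u hu
    have hLy := hν.lca_anc_lowPt hO1 hO2 u
    rw [hy] at hLy
    exact (hC2 u y hu hy).2.trans_le (hτS.le_of_anc hLy)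
  | a4 v hv =>
    have hd : R.IsDupHGT (R.T.par v) := .inr (R.trans_hgt v hv)
    obtain ⟨y, -, hy⟩ := hν.2.2.1 _ hd
    exact (hτS.le_of_anc (hν.anc_par_lca_union hO1 hO2 hv hy)).trans_lt (hC2 _ y hd hy).1

end ReconSetup

namespace ReconSetup

variable {V W : Type*} (R : ReconSetup V W) {τ : W → ℝ}

theorem extLE_of_placedAt (hτ : R.S.IsTimeMap τ) {L : W} {p q : W ⊕ W} {s t : ℝ}
    (hLp : R.S.anc L (lowPt p)) (hLq : R.S.anc L (lowPt q)) (hp : R.S.PlacedAt τ p s)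
    (hq : R.S.PlacedAt τ q t) (hts : t < s) :
    R.extLE p q ∧ (p.isLeft ∨ q.isLeft → R.extLT p q) := by
  rcases p with a | a <;> rcases q with b | b <;>
    simp only [RTree.PlacedAt, lowPt, Sum.elim_inl, Sum.elim_inr, id_eq] at hp hq hLp hLq
  · have hba : ¬ R.S.anc b a := fun h => by linarith [hτ.le_of_anc h]
    have hab := (R.S.anc_or_anc_par hLp hLq).resolve_right
      fun h => hba (R.S.anc_trans (R.S.anc_par b) h)
    exact ⟨hab, fun _ => ⟨hab, hba⟩⟩
  · have hba : ¬ R.S.anc (R.S.par b) a := fun h => by linarith [hτ.le_of_anc h]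
    have hab := (R.S.anc_or_anc_par hLp hLq).resolve_right hba
    exact ⟨hab, fun _ => ⟨hab, hba⟩⟩
  · have hba : ¬ R.S.anc b a := fun h => by linarith [hτ.le_of_anc h]
    have hab := (R.S.anc_or_anc_par hLq hLp).resolve_left hba
    exact ⟨hab, fun _ => ⟨hab, hba⟩⟩
  · refine ⟨(R.S.anc_or_anc_par hLp hLq).resolve_right fun h => ?_, ?_⟩
    · linarith [hτ.le_of_anc h]
    · simp

theorem incomp_of_placedAt (hτ : R.S.IsTimeMap τ) {A B : Set W} (hA : A.Nonempty)
    (hB : B.Nonempty) {p q : W ⊕ W} {s t : ℝ} (hAp : R.S.anc (R.lca A) (lowPt p))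
    (hBq : R.S.anc (R.lca B) (lowPt q)) (hp : R.S.PlacedAt τ p t) (hq : R.S.PlacedAt τ q s)
    (hts : t ≤ s) (hlca : τ (R.lca (A ∪ B)) < t) : R.incomp p q := by
  have hlow : ∀ x, R.S.anc (R.lca A) x → R.S.anc (R.lca B) x → τ x < t := fun x hAx hBx =>
    (hτ.le_of_anc (R.lca_union_anc hA hB hAx hBx)).trans_lt hlca
  exact ⟨fun h => (hlow _ (R.S.anc_trans hAp (R.anc_lowPt_of_extLE h)) hBq).not_ge
      (hts.trans hq.le_lowPt),
    fun h => (hlow _ hAp (R.S.anc_trans hBq (R.anc_lowPt_of_extLE h))).not_ge hp.le_lowPt⟩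

theorem M3_of_par {ν : V → W ⊕ W}
    (h : ∀ v, v ≠ R.T.root → v ∉ R.trans → R.extLE (ν v) (ν (R.T.par v)) ∧
      (¬ (R.IsDupHGT v ∧ R.IsDupHGT (R.T.par v)) → R.extLT (ν v) (ν (R.T.par v)))) :
    R.M3 ν := by
  suffices H : ∀ w k v, R.T.par^[k] v = w → (∀ i < k, R.T.par^[i] v ∉ R.trans) →
      R.extLE (ν v) (ν w) ∧ (v ≠ w → ¬ (R.IsDupHGT v ∧ R.IsDupHGT w) → R.extLT (ν v) (ν w)) by
    rintro v w ⟨⟨k, hk, hmem⟩, hne⟩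
    obtain ⟨hle, hlt⟩ := H w k v hk hmem
    exact ⟨fun _ => hle, hlt hne⟩
  intro w k
  induction k with
  | zero =>
    rintro v rfl -
    exact ⟨R.extLE_refl _, fun h => absurd rfl h⟩
  | succ k ih =>
    intro v hk hmem
    rcases eq_or_ne v R.T.root with rfl | hv
    · rw [R.T.iterate_par_root] at hk
      subst hk
      exact ⟨R.extLE_refl _, fun h => absurd rfl h⟩
    obtain ⟨hle₁, hlt₁⟩ := h v hv (hmem 0 k.succ_pos)
    obtain ⟨hle₂, hlt₂⟩ := ih (R.T.par v) hk fun i hi => hmem (i + 1) (by omega)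
    refine ⟨R.extLE_trans hle₁ hle₂, fun _ hd => ?_⟩
    by_cases hvd : R.IsDupHGT v
    · have hwd : ¬ R.IsDupHGT w := fun h => hd ⟨hvd, h⟩
      rcases eq_or_ne (R.T.par v) w with rfl | hne
      · exact hlt₁ fun h => hwd h.2
      · exact R.extLT_of_le_of_lt hle₁ (hlt₂ hne fun h => hwd h.2)
    · exact R.extLT_of_lt_of_le (hlt₁ fun h => hvd h.1) hle₂

variable {ν : V → W ⊕ W} {τT : V → ℝ} {τS : W → ℝ}

theorem isRecon_of_placedAt [Finite V] (hO1 : R.O1) (hO2 : R.O2) (hM1 : R.M1 ν) (hM2i : R.M2i ν) (hM2ii : R.M2ii ν)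
    (hτT : R.T.IsTimeMap τT) (hτS : R.S.IsTimeMap τS)
    (hplaced : ∀ u, R.S.PlacedAt τS (ν u) (τT u))
    (hbelow : ∀ u, R.S.anc (R.lca (R.sigmaBar u)) (lowPt (ν u)))
    (hD3 : ∀ v ∈ R.trans,
      τS (R.lca (R.sigmaBar (R.T.par v) ∪ R.sigmaBar v)) < τT (R.T.par v)) :
    R.IsRecon ν := by
  have hleft : ∀ u, ¬ R.IsDupHGT u → (ν u).isLeft := fun u hu => by
    obtain ⟨x, hx⟩ := exists_inl_of_not_isDupHGT hM1 hM2i hu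
    rw [hx]
    rfl
  refine ⟨hM1, hM2i, hM2ii, fun v hv => ?_, R.M3_of_par fun v hv htr => ?_⟩
  · exact R.incomp_of_placedAt hτS (R.sigmaBar_nonempty hO1 hO2 _)
      (R.sigmaBar_nonempty hO1 hO2 v) (hbelow _) (hbelow v) (hplaced _) (hplaced v)
      (hτT.le_of_anc (R.T.anc_par v)) (hD3 v hv)
  · have hsub := R.lca_anc_lca (R.sigmaBar_nonempty hO1 hO2 v) (R.sigmaBar_mono (R.fanc_par htr))
    refine (R.extLE_of_placedAt hτS (hbelow v) (R.S.anc_trans hsub (hbelow _)) (hplaced v)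
      (hplaced _) (hτT _ _ (R.T.sanc_par hv))).imp_right fun hlt hd => hlt ?_
    by_cases hvd : R.IsDupHGT v
    · exact .inr (hleft _ fun h => hd ⟨hvd, h⟩)
    · exact .inl (hleft v hvd)

theorem timeConsistent_of_placedAt (hτT : R.T.IsTimeMap τT) (hτS : R.S.IsTimeMap τS)
    (hplaced : ∀ u, R.S.PlacedAt τS (ν u) (τT u)) : R.TimeConsistent ν := by
  refine ⟨τT, τS, hτT, hτS, fun u _ _ hx => ?_, fun u _ _ hx => ?_⟩ <;>
  · have := hplaced u
    rwa [hx] at this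

theorem exists_timeConsistent_of_potential [Finite V] (hO1 : R.O1) (hO2 : R.O2) {μ : V → W ⊕ W}
    (hμ : R.IsRecon μ) (g : V ⊕ W → ℝ) (hg : ∀ a b, A2rel R μ a b → g a < g b)
    (hsep : ∀ u x, g (.inl u) ≠ g (.inr x)) (hroot : ∀ u, g (.inr R.S.root) < g (.inl u)) :
    ∃ ν, R.IsRecon ν ∧ R.TimeConsistent ν := by
  classical
  set τS : W → ℝ := fun x => g (.inr x)
  set τT : V → ℝ := fun u => g (toA R μ u)
  have hτS : R.S.IsTimeMap τS := R.S.isTimeMap_of_par_lt fun y hy => hg _ _ (.a2 y hy)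
  have hτT : R.T.IsTimeMap τT := R.T.isTimeMap_of_par_lt fun v hv => hg _ _ (.a1 v hv)
  have hτT_dup : ∀ u, R.IsDupHGT u → τT u = g (.inl u) := fun u hu =>
    congrArg g (R.toA_of_isDupHGT hu)
  have hedge : ∀ u, R.IsDupHGT u → ∃ y, R.S.anc (R.lca (R.sigmaBar u)) y ∧ y ≠ R.S.root ∧
      R.S.PlacedAt τS (.inr y) (τT u) := fun u hu => by
    rw [hτT_dup u hu]
    exact R.S.exists_placedAt_inr (fun x h => hsep u x h.symm) (hroot u) (hg _ _ (.a3 u hu))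
  choose Y hYanc hYroot hYplaced using hedge
  set ν : V → W ⊕ W := fun u => if h : R.IsDupHGT u then .inr (Y u h) else μ u
  have hν : ∀ u, ¬ R.IsDupHGT u → ν u = μ u := fun u h => dif_neg h
  have hplaced : ∀ u, R.S.PlacedAt τS (ν u) (τT u) ∧
      R.S.anc (R.lca (R.sigmaBar u)) (lowPt (ν u)) := by
    intro u
    by_cases hu : R.IsDupHGT u
    · simp only [ν, dif_pos hu]
      exact ⟨hYplaced u hu, hYanc u hu⟩
    · obtain ⟨x, hx⟩ := exists_inl_of_not_isDupHGT hμ.1 hμ.2.1 hu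
      refine ⟨?_, hν u hu ▸ hμ.lca_anc_lowPt hO1 hO2 u⟩
      simp only [hν u hu, hx, τT, R.toA_of_not_isDupHGT hu]
      rfl
  obtain ⟨hM1, hM2i⟩ := hμ.M1_M2i_of_eq hν
  have hM2ii : R.M2ii ν := fun u hu => ⟨Y u hu, hYroot u hu, dif_pos hu⟩
  have hD3 : ∀ v ∈ R.trans,
      τS (R.lca (R.sigmaBar (R.T.par v) ∪ R.sigmaBar v)) < τT (R.T.par v) := fun v hv => by
    rw [hτT_dup _ (.inr (R.trans_hgt v hv))]
    exact hg _ _ (.a4 v hv)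
  exact ⟨ν, R.isRecon_of_placedAt hO1 hO2 hM1 hM2i hM2ii hτT hτS (fun u => (hplaced u).1)
    (fun u => (hplaced u).2) hD3, R.timeConsistent_of_placedAt hτT hτS fun u => (hplaced u).1⟩

end ReconSetup

theorem stmt14_general {V W : Type*} [Fintype V] [Fintype W]
    (R : ReconSetup V W) (μ : V → W ⊕ W) (hrec : R.IsRecon μ)
    (hO1 : R.O1) (hO2 : R.O2) :
    (∃ μ', R.IsRecon μ' ∧ R.TimeConsistent μ') ↔ Acyclic (A2rel R μ) := by
  refine ⟨fun ⟨ν, hν, hTC⟩ => R.acyclic_A2rel_of_timeConsistent hO1 hO2 hrec hν hTC,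
    fun hacyc => ?_⟩
  obtain ⟨g, hg, hsep, hroot⟩ :=
    exists_potential_of_acyclic hacyc R.S.root (hrec.not_A2rel_inr_root hO1 hO2)
  exact R.exists_timeConsistent_of_potential hO1 hO2 hrec g hg hsep hroot

/-- given a reconciliation map `μ` from `(T;t,σ)` to `S`, there
exists a time-consistent reconciliation map from `(T;t,σ)` to `S` iff the
auxiliary graph `A₂` is acyclic. -/
theorem stmt14 {V W : Type*} [Fintype V] [Fintype W]
    (R : ReconSetup V W) (μ : V → W ⊕ W) (hrec : R.IsRecon μ)
    (hO1 : R.O1) (hO2 : R.O2) (hS1 : R.Sigma1) (hS2 : R.Sigma2) :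
    (∃ μ', R.IsRecon μ' ∧ R.TimeConsistent μ') ↔ Acyclic (A2rel R μ) :=
  stmt14_general R μ hrec hO1 hO2
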